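/- arXiv:2001.08490 — 2 statements merged into one kernel-verified Lean document; each statement's English description precedes it below -/
import Mathlib

section
/- Let π be a faithful unitary representation of G of finite degree, and let (Γ,Ψ) be a G-gain graph. Then (Γ,Ψ) is balanced if and only if Tr((A_π)^h) = Tr((|A|_π)^h) for all h ∈ ℕ, where A_π and |A|_π are the represented adjacency matrices of (Γ,Ψ) and of (Γ,1_G) (all gains trivial) at π. -/
open scoped Kronecker
open Matrix Polynomial Filter

namespace GainPaper

variable {G : Type*} [Group G]

/-- The gain of a walk: product of the gains of its darts. -/
def walkGain {n : ℕ} {Γ : SimpleGraph (Fin n)} {M : Type*} [Monoid M]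
    (Ψ : Fin n → Fin n → M) {u v : Fin n} (p : Γ.Walk u v) : M :=
  (p.darts.map fun d => Ψ d.toProd.1 d.toProd.2).prod

/-- `Ψ` is a gain function on `Γ`: the gain of an edge in the reverse
orientation is the inverse of its gain. -/
def IsGain {n : ℕ} (Γ : SimpleGraph (Fin n)) (Ψ : Fin n → Fin n → G) : Prop :=
  ∀ i j, Γ.Adj i j → Ψ j i = (Ψ i j)⁻¹

/-- A gain graph is balanced if every closed walk has gain `1`. -/
def IsBalanced {n : ℕ} (Γ : SimpleGraph (Fin n)) {M : Type*} [Monoid M]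
    (Ψ : Fin n → Fin n → M) : Prop :=
  ∀ (v : Fin n) (p : Γ.Walk v v), walkGain Ψ p = 1

/-- The adjacency matrix of a gain graph, with entries in the group algebra ℂG. -/
noncomputable def gainAdj {n : ℕ} (Γ : SimpleGraph (Fin n)) [DecidableRel Γ.Adj]
    (Ψ : Fin n → Fin n → G) : Matrix (Fin n) (Fin n) (MonoidAlgebra ℂ G) :=
  Matrix.of fun i j => if Γ.Adj i j then MonoidAlgebra.single (Ψ i j) 1 else 0

/-- The involution on ℂG: `(Σ f_x x)* = Σ conj(f_x) x⁻¹`. -/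
noncomputable def starCG (f : MonoidAlgebra ℂ G) : MonoidAlgebra ℂ G :=
  f.coeff.sum fun x c => MonoidAlgebra.single x⁻¹ (starRingEnd ℂ c)

/-- The involution on M_n(ℂG): `(F*)_{i,j} = (F_{j,i})*`. -/
noncomputable def starM {n : ℕ} (F : Matrix (Fin n) (Fin n) (MonoidAlgebra ℂ G)) :
    Matrix (Fin n) (Fin n) (MonoidAlgebra ℂ G) :=
  Matrix.of fun i j => starCG (F j i)

/-- The trace on M_n(ℂG): sum over the diagonal of the coefficients of `1_G`. -/
noncomputable def trCG {n : ℕ} (F : Matrix (Fin n) (Fin n) (MonoidAlgebra ℂ G)) : ℂ :=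
  ∑ i, (F i i).coeff 1

/-- The Fourier transform of `f ∈ ℂG` at `π`: `Σ_x f(x) π(x)`. -/
noncomputable def fourier {m : Type*} (f : MonoidAlgebra ℂ G) (π : G → Matrix m m ℂ) :
    Matrix m m ℂ :=
  f.coeff.sum fun x c => c • π x

/-- The (finite) set of group elements appearing in some entry of `F`. -/
noncomputable def matSupport {n : ℕ} (F : Matrix (Fin n) (Fin n) (MonoidAlgebra ℂ G)) :
    Finset G :=
  letI := Classical.decEq G
  Finset.univ.biUnion fun i : Fin n => Finset.univ.biUnion fun j : Fin n => (F i j).coeff.support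

/-- `F(x)`: the complex matrix of coefficients of `x` in the entries of `F`. -/
def matCoeff {n : ℕ} (F : Matrix (Fin n) (Fin n) (MonoidAlgebra ℂ G)) (x : G) :
    Matrix (Fin n) (Fin n) ℂ :=
  Matrix.of fun i j => (F i j).coeff x

/-- Fourier transform of `F ∈ M_n(ℂG)` at `π`: `F̂(π) = Σ_{x∈G} F(x) ⊗ π(x)`. -/
noncomputable def fourierM {n : ℕ} {m : Type*} (F : Matrix (Fin n) (Fin n) (MonoidAlgebra ℂ G))
    (π : G → Matrix m m ℂ) : Matrix (Fin n × m) (Fin n × m) ℂ :=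
  ∑ x ∈ matSupport F, matCoeff F x ⊗ₖ π x

/-- A representation is unitary if each `π g` is a unitary matrix. -/
def IsUnitaryRep {m : Type*} [Fintype m] [DecidableEq m] (π : G →* Matrix m m ℂ) : Prop :=
  ∀ g, π g ∈ Matrix.unitaryGroup m ℂ

/-- Irreducibility: the space is nonzero and has no nontrivial invariant subspace. -/
def IsIrred {m : Type*} [Fintype m] [DecidableEq m] (π : G →* Matrix m m ℂ) : Prop :=
  Nonempty m ∧
    ∀ W : Submodule ℂ (m → ℂ), (∀ g, ∀ v ∈ W, (π g).mulVec v ∈ W) → W = ⊥ ∨ W = ⊤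

/-- Equivalence of two matrix representations: an invertible intertwiner. -/
def RepEquiv {m m' : Type*} [Fintype m] [DecidableEq m] [Fintype m'] [DecidableEq m']
    (π : G →* Matrix m m ℂ) (π' : G →* Matrix m' m' ℂ) : Prop :=
  ∃ e : (m → ℂ) ≃ₗ[ℂ] (m' → ℂ), ∀ g v, e ((π g).mulVec v) = (π' g).mulVec (e v)

/-- λ₁: the largest real root of the characteristic polynomial
(= the largest eigenvalue, for a Hermitian matrix). -/
noncomputable def lam1 {m : Type*} [Fintype m] [DecidableEq m] (M : Matrix m m ℂ) : ℝ :=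
  sSup {x : ℝ | M.charpoly.IsRoot (x : ℂ)}

/-- Spectral radius: the sup of the absolute values of the eigenvalues. -/
noncomputable def specRad {m : Type*} [Fintype m] [DecidableEq m] (M : Matrix m m ℂ) : ℝ :=
  sSup {r : ℝ | ∃ μ : ℂ, M.charpoly.IsRoot μ ∧ r = ‖μ‖}

/-- Adjacency relation of the cover graph on `V × G`:
`(u,g) ∼ (v,h)` iff `u ∼ v` and `h = Ψ(u,v)⁻¹ g`. -/
def coverAdj {n : ℕ} (Γ : SimpleGraph (Fin n)) (Ψ : Fin n → Fin n → G) (p q : Fin n × G) :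
    Prop :=
  Γ.Adj p.1 q.1 ∧ q.2 = (Ψ p.1 q.1)⁻¹ * p.2

/-- The {0,1} adjacency matrix of the cover graph. -/
noncomputable def coverMatrix {n : ℕ} [DecidableEq G] (Γ : SimpleGraph (Fin n))
    [DecidableRel Γ.Adj] (Ψ : Fin n → Fin n → G) : Matrix (Fin n × G) (Fin n × G) ℂ :=
  Matrix.of fun p q => if Γ.Adj p.1 q.1 ∧ q.2 = (Ψ p.1 q.1)⁻¹ * p.2 then 1 else 0

/-- The left regular representation, as matrices:
`λ_G(g)_{r,p} = 1` if `g = r p⁻¹`, else `0`. -/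
noncomputable def lamG [DecidableEq G] : G → Matrix G G ℂ :=
  fun g => Matrix.of fun r p => if g = r * p⁻¹ then 1 else 0

/-!
By the walk expansion of powers of a weighted adjacency matrix, `tr (A_π ^ h)` is the sum of
`tr π(gain p)` over the closed walks `p` of length `h`, while for trivial gains each term is `k`.
For a unitary `U`, `‖U - 1‖²_F = 2 (k - re tr U)`, so `re tr U ≤ k` with equality only at
`U = 1`. Equality of the traces therefore forces `π(gain p) = 1` for every closed walk, and
faithfulness gives `gain p = 1`.
-/

open scoped ComplexOrder

section Unitary

variable {m : Type*} [Fintype m] [DecidableEq m] {U : Matrix m m ℂ}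

lemma trace_conjTranspose_sub_one_mul_sub_one (hU : U ∈ unitaryGroup m ℂ) :
    ((U - 1)ᴴ * (U - 1)).trace = ((2 * (Fintype.card m - U.trace.re) : ℝ) : ℂ) := by
  have hUU : Uᴴ * U = 1 := mem_unitaryGroup_iff'.mp hU
  have hre : U.trace + star U.trace = 2 * U.trace.re := by
    rw [Complex.star_def, Complex.add_conj, Complex.ofReal_mul, Complex.ofReal_ofNat]
  simp only [conjTranspose_sub, conjTranspose_one, sub_mul, mul_sub, hUU, one_mul, mul_one,
    trace_sub, trace_one, trace_conjTranspose]
  push_cast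
  linear_combination -hre

lemma re_trace_le_card_of_mem_unitaryGroup (hU : U ∈ unitaryGroup m ℂ) :
    U.trace.re ≤ Fintype.card m := by
  have h := (posSemidef_conjTranspose_mul_self (U - 1)).trace_nonneg
  rw [trace_conjTranspose_sub_one_mul_sub_one hU, Complex.zero_le_real] at h
  linarith

lemma eq_one_of_re_trace_eq_card (hU : U ∈ unitaryGroup m ℂ)
    (htr : U.trace.re = Fintype.card m) : U = 1 :=
  sub_eq_zero.mp <| trace_conjTranspose_mul_self_eq_zero_iff.mp <| by
    rw [trace_conjTranspose_sub_one_mul_sub_one hU, htr, sub_self, mul_zero, Complex.ofReal_zero]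

end Unitary

section WeightedAdjacency

variable {V R : Type*} [Semiring R] (Γ : SimpleGraph V) [DecidableRel Γ.Adj]

def weightedAdjMatrix (w : V → V → R) : Matrix V V R :=
  of fun i j => if Γ.Adj i j then w i j else 0

@[simp]
lemma weightedAdjMatrix_apply (w : V → V → R) (i j : V) :
    weightedAdjMatrix Γ w i j = if Γ.Adj i j then w i j else 0 :=
  rfl

lemma weightedAdjMatrix_pow_apply [Fintype V] [DecidableEq V] (w : V → V → R) (h : ℕ) (u v : V) :
    (weightedAdjMatrix Γ w ^ h) u v =
      ∑ p ∈ Γ.finsetWalkLength h u v, (p.darts.map fun d => w d.toProd.1 d.toProd.2).prod := by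
  induction h generalizing u v with
  | zero => obtain rfl | huv := eq_or_ne u v <;> simp [SimpleGraph.finsetWalkLength, one_apply, *]
  | succ h ih =>
    rw [pow_succ', mul_apply, SimpleGraph.finsetWalkLength, Finset.sum_biUnion]
    · simp only [weightedAdjMatrix_apply, ite_mul, zero_mul, ← Finset.sum_filter]
      rw [Finset.sum_subtype _ (p := (· ∈ Γ.neighborSet u)) (by simp)]
      refine Finset.sum_congr rfl fun x _ => ?_
      rw [Finset.sum_map, ih, Finset.mul_sum]
      rfl
    · rintro ⟨x, hx⟩ - ⟨y, hy⟩ - hxy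
      simp only [Function.onFun, Finset.disjoint_left, Finset.mem_map]
      rintro _ ⟨_, -, rfl⟩ ⟨_, -, hp⟩
      cases hp
      exact hxy rfl

end WeightedAdjacency

lemma trace_comp {I J R : Type*} [Fintype I] [Fintype J] [AddCommMonoid R]
    (M : Matrix I I (Matrix J J R)) :
    (comp I I J J R M).trace = ∑ i, (M i i).trace := by
  simp only [trace, diag, comp_apply, Fintype.sum_prod_type]

omit [Group G] in
lemma fourierM_apply {n : ℕ} {m : Type*} (F : Matrix (Fin n) (Fin n) (MonoidAlgebra ℂ G))
    (π : G → Matrix m m ℂ) (i j : Fin n) (s t : m) :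
    fourierM F π (i, s) (j, t) = (F i j).coeff.sum fun x c => c * π x s t := by
  simp only [fourierM, Matrix.sum_apply, kroneckerMap_apply, matCoeff, of_apply]
  refine (Finsupp.sum_of_support_subset (F i j).coeff (s := matSupport F) (fun x hx => ?_)
    (fun x c => c * π x s t) fun _ _ => zero_mul _).symm
  simp only [matSupport, Finset.mem_biUnion]
  exact ⟨i, Finset.mem_univ _, j, Finset.mem_univ _, hx⟩

section Fourier

variable {n : ℕ} {m : Type*} [Fintype m] [DecidableEq m]

lemma fourierM_gainAdj (Γ : SimpleGraph (Fin n)) [DecidableRel Γ.Adj]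
    (Ψ : Fin n → Fin n → G) (π : G →* Matrix m m ℂ) :
    fourierM (gainAdj Γ Ψ) π = comp _ _ _ _ ℂ (weightedAdjMatrix Γ fun i j => π (Ψ i j)) := by
  ext ⟨i, s⟩ ⟨j, t⟩
  by_cases hij : Γ.Adj i j <;> simp [fourierM_apply, gainAdj, hij]

lemma walkGain_map {M N : Type*} [Monoid M] [Monoid N] {Γ : SimpleGraph (Fin n)}
    (f : M →* N) (Ψ : Fin n → Fin n → M) {u v : Fin n} (p : Γ.Walk u v) :
    walkGain (fun i j => f (Ψ i j)) p = f (walkGain Ψ p) := by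
  simp [walkGain, map_list_prod, List.map_map, Function.comp_def]

@[simp]
lemma walkGain_one {M : Type*} [Monoid M] {Γ : SimpleGraph (Fin n)} {u v : Fin n}
    (p : Γ.Walk u v) : walkGain (fun _ _ => (1 : M)) p = 1 := by
  simp [walkGain]

lemma trace_fourierM_gainAdj_pow (Γ : SimpleGraph (Fin n)) [DecidableRel Γ.Adj]
    (Ψ : Fin n → Fin n → G) (π : G →* Matrix m m ℂ) (h : ℕ) :
    (fourierM (gainAdj Γ Ψ) π ^ h).trace =
      ∑ u, ∑ p ∈ Γ.finsetWalkLength h u u, (π (walkGain Ψ p)).trace := by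
  rw [fourierM_gainAdj, ← compRingEquiv_apply, ← map_pow, compRingEquiv_apply, trace_comp]
  simp only [weightedAdjMatrix_pow_apply, trace_sum, ← walkGain_map]
  rfl

end Fourier

theorem statement10_general {G : Type*} [Group G] {n k : ℕ} (Γ : SimpleGraph (Fin n))
    [DecidableRel Γ.Adj] (Ψ : Fin n → Fin n → G)
    (π : G →* Matrix (Fin k) (Fin k) ℂ) (hU : IsUnitaryRep π)
    (hfaith : Function.Injective ⇑π) :
    IsBalanced Γ Ψ ↔
      ∀ h : ℕ, (fourierM (gainAdj Γ Ψ) ⇑π ^ h).trace =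
        (fourierM (gainAdj Γ (fun _ _ => 1)) ⇑π ^ h).trace := by
  simp only [trace_fourierM_gainAdj_pow, walkGain_one, map_one]
  refine ⟨fun hbal h => by simp only [hbal _ _, map_one], fun htr v p => ?_⟩
  have hle : ∀ u (q : Γ.Walk u u), (π (walkGain Ψ q)).trace.re ≤ k := fun u q => by
    simpa using re_trace_le_card_of_mem_unitaryGroup (hU _)
  have hsum := congrArg Complex.re (htr p.length)
  simp only [trace_one, Fintype.card_fin, Complex.re_sum, Complex.natCast_re] at hsum
  have hsum_v := (Finset.sum_eq_sum_iff_of_le fun u _ => Finset.sum_le_sum fun q _ => hle u q).mp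
    hsum v (Finset.mem_univ v)
  have htr_p := (Finset.sum_eq_sum_iff_of_le fun q _ => hle v q).mp hsum_v p
    (SimpleGraph.mem_finsetWalkLength_iff.mpr rfl)
  refine hfaith ((eq_one_of_re_trace_eq_card (hU _) ?_).trans (map_one π).symm)
  simpa using htr_p

/-- for a faithful unitary representation, balance is equivalent to
equality of the traces of all powers of the represented adjacency matrices. -/
theorem statement10 {G : Type*} [Group G] {n k : ℕ} (Γ : SimpleGraph (Fin n))
    [DecidableRel Γ.Adj] (Ψ : Fin n → Fin n → G) (hΨ : IsGain Γ Ψ)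
    (π : G →* Matrix (Fin k) (Fin k) ℂ) (hU : IsUnitaryRep π)
    (hfaith : Function.Injective ⇑π) :
    IsBalanced Γ Ψ ↔
      ∀ h : ℕ, (fourierM (gainAdj Γ Ψ) ⇑π ^ h).trace =
        (fourierM (gainAdj Γ (fun _ _ => 1)) ⇑π ^ h).trace :=
  statement10_general Γ Ψ π hU hfaith

end GainPaper
end

section
/- Let G be a finite subgroup of the complex unit group 𝕋 and let (Γ,Ψ) be a G-gain graph whose underlying graph Γ is connected, with complex adjacency matrix A ∈ M_n(ℂ) whose (i,j) entry is Ψ(v_i,v_j) ∈ 𝕋 if v_i ∼ v_j and 0 otherwise. Then (Γ,Ψ) is balanced if and only if the largest eigenvalue λ₁(Γ,Ψ) of the Hermitian matrix A equals the largest eigenvalue λ₁(Γ) of the adjacency matrix of the underlying graph Γ. -/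
/-!
For connected `Γ`, a gain function is balanced iff it is a switching of the trivial one:
`Ψ i j = (θ i)⁻¹ * θ j` on every edge for some potential `θ` (take `θ i` to be the gain of a fixed
walk from a root to `i`). A switching conjugates `A(Γ, Ψ)` into `A(Γ)` by an invertible diagonal
matrix, so the two spectra coincide.

Conversely, let `x` be an eigenvector of `A(Γ, Ψ)` for `λ₁(Γ, Ψ)` and `|x|` its entrywise norm. Since
`|Ψ| = 1`, the triangle inequality gives
`λ₁(Γ, Ψ) ‖x‖² = x* A(Γ, Ψ) x ≤ |x|* A(Γ) |x| ≤ λ₁(Γ) ‖x‖²`.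
If `λ₁(Γ, Ψ) = λ₁(Γ)`, both inequalities are equalities. The second makes `|x|` an eigenvector of
`A(Γ)`, which is nowhere zero because `Γ` is connected. The first makes every term
`conj (x i) * Ψ i j * x j` nonnegative, i.e. `Ψ i j = (θ i)⁻¹ * θ j` with `θ i = ‖x i‖ / x i`.
-/

open scoped Kronecker
open Matrix Polynomial Filter

namespace GainPaper

variable {G : Type*} [Group G]

open scoped ComplexOrder

section Spectral


variable {ι : Type*} [Fintype ι] [DecidableEq ι] {M : Matrix ι ι ℂ}

theorem setOf_isRoot_charpoly_eq_range (hM : M.IsHermitian) :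
    {x : ℝ | M.charpoly.IsRoot (x : ℂ)} = Set.range hM.eigenvalues := by
  ext x
  simp [hM.charpoly_eq, Polynomial.eval_prod, Finset.prod_eq_zero_iff, sub_eq_zero, @eq_comm ℝ x]

theorem eigenvalues_le_lam1 (hM : M.IsHermitian) (i : ι) : hM.eigenvalues i ≤ lam1 M := by
  rw [lam1, setOf_isRoot_charpoly_eq_range hM]
  exact le_csSup (Set.finite_range _).bddAbove ⟨i, rfl⟩

theorem lam1_mem_range_eigenvalues [Nonempty ι] (hM : M.IsHermitian) :
    lam1 M ∈ Set.range hM.eigenvalues := by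
  rw [lam1, setOf_isRoot_charpoly_eq_range hM]
  exact (Set.range_nonempty _).csSup_mem (Set.finite_range _)

theorem exists_mulVec_eq_lam1_smul [Nonempty ι] (hM : M.IsHermitian) :
    ∃ x : ι → ℂ, x ≠ 0 ∧ M *ᵥ x = (lam1 M : ℂ) • x := by
  obtain ⟨i, hi⟩ := lam1_mem_range_eigenvalues hM
  refine ⟨⇑(hM.eigenvectorBasis i), fun h => ?_, ?_⟩
  · simpa [show hM.eigenvectorBasis i = 0 from WithLp.ofLp_injective 2 h] using
      hM.eigenvectorBasis.orthonormal.1 i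
  · rw [hM.mulVec_eigenvectorBasis, hi, Complex.coe_smul]

theorem posSemidef_lam1_smul_one_sub (hM : M.IsHermitian) :
    ((lam1 M : ℂ) • 1 - M).PosSemidef := by
  set U : Matrix ι ι ℂ := (hM.eigenvectorUnitary : Matrix ι ι ℂ)
  have hU : U * Uᴴ = 1 := Matrix.mem_unitaryGroup_iff.mp hM.eigenvectorUnitary.2
  have hspec : M = U * diagonal (RCLike.ofReal ∘ hM.eigenvalues) * Uᴴ :=
    hM.spectral_theorem.trans (Unitary.conjStarAlgAut_apply _ _)
  have hdecomp : (lam1 M : ℂ) • 1 - M =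
      U * diagonal (fun i => ((lam1 M - hM.eigenvalues i : ℝ) : ℂ)) * Uᴴ := by
    calc (lam1 M : ℂ) • 1 - M
        = U * (lam1 M : ℂ) • 1 * Uᴴ - U * diagonal (RCLike.ofReal ∘ hM.eigenvalues) * Uᴴ := by
          rw [Matrix.mul_smul, mul_one, Matrix.smul_mul, hU, ← hspec]
      _ = U * diagonal (fun i => ((lam1 M - hM.eigenvalues i : ℝ) : ℂ)) * Uᴴ := by
          rw [← sub_mul, ← mul_sub, smul_one_eq_diagonal, diagonal_sub]
          simp
  rw [hdecomp]
  exact (PosSemidef.diagonal fun i => Complex.zero_le_real.mpr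
    (sub_nonneg.mpr (eigenvalues_le_lam1 hM i))).mul_mul_conjTranspose_same U

theorem star_dotProduct_lam1_smul_one_sub_mulVec (x : ι → ℂ) :
    star x ⬝ᵥ ((lam1 M : ℂ) • 1 - M) *ᵥ x = lam1 M * (star x ⬝ᵥ x) - star x ⬝ᵥ M *ᵥ x := by
  rw [sub_mulVec, smul_mulVec, one_mulVec, dotProduct_sub, dotProduct_smul, smul_eq_mul]

theorem re_star_dotProduct_mulVec_le (hM : M.IsHermitian) (x : ι → ℂ) :
    (star x ⬝ᵥ M *ᵥ x).re ≤ lam1 M * (star x ⬝ᵥ x).re := by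
  have h := (posSemidef_lam1_smul_one_sub hM).dotProduct_mulVec_nonneg x
  rw [star_dotProduct_lam1_smul_one_sub_mulVec] at h
  have := (Complex.le_def.mp h).1
  rw [Complex.zero_re, Complex.sub_re, Complex.re_ofReal_mul] at this
  linarith

theorem mulVec_eq_lam1_smul_of_re_eq (hM : M.IsHermitian) {x : ι → ℂ}
    (h : (star x ⬝ᵥ M *ᵥ x).re = lam1 M * (star x ⬝ᵥ x).re) :
    M *ᵥ x = (lam1 M : ℂ) • x := by
  have hP := posSemidef_lam1_smul_one_sub hM
  have hzero : star x ⬝ᵥ ((lam1 M : ℂ) • 1 - M) *ᵥ x = 0 := by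
    refine Complex.ext ?_ (Complex.le_def.mp (hP.dotProduct_mulVec_nonneg x)).2.symm
    rw [star_dotProduct_lam1_smul_one_sub_mulVec, Complex.sub_re, Complex.re_ofReal_mul, h,
      sub_self, Complex.zero_re]
  have := (hP.dotProduct_mulVec_zero_iff x).mp hzero
  rwa [sub_mulVec, smul_mulVec, one_mulVec, sub_eq_zero, eq_comm] at this

end Spectral

section NormComparison


variable {ι : Type*} [Fintype ι]

theorem star_dotProduct_mulVec_eq_sum (A : Matrix ι ι ℂ) (x : ι → ℂ) :
    star x ⬝ᵥ A *ᵥ x = ∑ p : ι × ι, star (x p.1) * A p.1 p.2 * x p.2 := by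
  simp [dotProduct, mulVec, Finset.mul_sum, mul_assoc, Fintype.sum_prod_type]

theorem star_dotProduct_map_norm_mulVec (A : Matrix ι ι ℂ) (x : ι → ℂ) :
    star (fun i => (‖x i‖ : ℂ)) ⬝ᵥ A.map (fun z => (‖z‖ : ℂ)) *ᵥ (fun i => (‖x i‖ : ℂ)) =
      ((∑ p : ι × ι, ‖star (x p.1) * A p.1 p.2 * x p.2‖ : ℝ) : ℂ) := by
  rw [star_dotProduct_mulVec_eq_sum]
  push_cast
  refine Finset.sum_congr rfl fun p _ => ?_
  simp

theorem re_star_dotProduct_mulVec_le_map_norm (A : Matrix ι ι ℂ) (x : ι → ℂ) :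
    (star x ⬝ᵥ A *ᵥ x).re ≤
      (star (fun i => (‖x i‖ : ℂ)) ⬝ᵥ A.map (fun z => (‖z‖ : ℂ)) *ᵥ fun i => (‖x i‖ : ℂ)).re := by
  rw [star_dotProduct_mulVec_eq_sum, star_dotProduct_map_norm_mulVec, Complex.re_sum,
    Complex.ofReal_re]
  exact Finset.sum_le_sum fun p _ => Complex.re_le_norm _

theorem nonneg_of_re_star_dotProduct_mulVec_eq_map_norm {A : Matrix ι ι ℂ} {x : ι → ℂ}
    (h : (star x ⬝ᵥ A *ᵥ x).re =
      (star (fun i => (‖x i‖ : ℂ)) ⬝ᵥ A.map (fun z => (‖z‖ : ℂ)) *ᵥ fun i => (‖x i‖ : ℂ)).re)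
    (i j : ι) : 0 ≤ star (x i) * A i j * x j := by
  rw [star_dotProduct_mulVec_eq_sum, star_dotProduct_map_norm_mulVec, Complex.re_sum,
    Complex.ofReal_re] at h
  exact Complex.re_eq_norm.mp <|
    (Finset.sum_eq_sum_iff_of_le fun p _ => Complex.re_le_norm _).mp h (i, j) (Finset.mem_univ _)

end NormComparison

section Graph

variable {V : Type*} {Γ : SimpleGraph V}

theorem forall_of_adj_closed (hΓ : Γ.Preconnected) {P : V → Prop}
    (hP : ∀ u v, Γ.Adj u v → P u → P v) {u : V} (hu : P u) (v : V) : P v := by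
  obtain ⟨p⟩ := hΓ u v
  induction p with
  | nil => exact hu
  | cons h _ ih => exact ih (hP _ _ h hu)

theorem ne_zero_of_adjMatrix_mulVec_eq_smul [Fintype V] [DecidableRel Γ.Adj]
    (hΓ : Γ.Connected) {w : V → ℝ} (hw : ∀ v, 0 ≤ w v) (hw0 : w ≠ 0) {c : ℂ}
    (h : Γ.adjMatrix ℂ *ᵥ (fun v => (w v : ℂ)) = c • fun v => (w v : ℂ)) (v : V) :
    w v ≠ 0 := by
  classical
  have hclosed : ∀ a b, Γ.Adj a b → w a = 0 → w b = 0 := by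
    intro a b hab ha
    have hsum : ∑ u ∈ Γ.neighborFinset a, w u = 0 := by
      have := congrFun h a
      rw [SimpleGraph.adjMatrix_mulVec_apply, Pi.smul_apply, ha, Complex.ofReal_zero,
        smul_zero] at this
      exact_mod_cast this
    exact (Finset.sum_eq_zero_iff_of_nonneg fun u _ => hw u).mp hsum b (by simpa using hab)
  exact fun hv => hw0 (funext fun u => forall_of_adj_closed hΓ.preconnected hclosed hv u)

end Graph

section WalkGain

variable {n : ℕ} {Γ : SimpleGraph (Fin n)} {M : Type*} [Monoid M] {Ψ : Fin n → Fin n → M}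

@[simp]
theorem walkGain_nil {u : Fin n} : walkGain Ψ (SimpleGraph.Walk.nil : Γ.Walk u u) = 1 := rfl

@[simp]
theorem walkGain_cons {u v w : Fin n} (h : Γ.Adj u v) (p : Γ.Walk v w) :
    walkGain Ψ (SimpleGraph.Walk.cons h p) = Ψ u v * walkGain Ψ p := by
  simp [walkGain]

theorem walkGain_append {u v w : Fin n} (p : Γ.Walk u v) (q : Γ.Walk v w) :
    walkGain Ψ (p.append q) = walkGain Ψ p * walkGain Ψ q := by
  simp [walkGain]

theorem walkGain_eq_of_units {θ : Fin n → Mˣ}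
    (hθ : ∀ i j, Γ.Adj i j → Ψ i j = ↑(θ i)⁻¹ * θ j) {u v : Fin n} (p : Γ.Walk u v) :
    walkGain Ψ p = ↑(θ u)⁻¹ * θ v := by
  induction p with
  | nil => simp
  | cons h _ ih => rw [walkGain_cons, ih, hθ _ _ h, mul_assoc, Units.mul_inv_cancel_left]

theorem isBalanced_of_units {θ : Fin n → Mˣ}
    (hθ : ∀ i j, Γ.Adj i j → Ψ i j = ↑(θ i)⁻¹ * θ j) : IsBalanced Γ Ψ := fun v p => by
  rw [walkGain_eq_of_units hθ p, Units.inv_mul]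

theorem exists_units_of_isBalanced (hΓ : Γ.Connected) (hΨ : IsBalanced Γ Ψ) :
    ∃ θ : Fin n → Mˣ, ∀ i j, Γ.Adj i j → Ψ i j = ↑(θ i)⁻¹ * θ j := by
  obtain ⟨v₀⟩ := hΓ.nonempty
  let p : ∀ i, Γ.Walk v₀ i := fun i => (hΓ.preconnected v₀ i).some
  let θ : Fin n → Mˣ := fun i =>
    ⟨walkGain Ψ (p i), walkGain Ψ (p i).reverse,
      by rw [← walkGain_append]; exact hΨ _ _, by rw [← walkGain_append]; exact hΨ _ _⟩
  refine ⟨θ, fun i j h => ?_⟩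
  have hcycle : θ i * (Ψ i j * ↑(θ j)⁻¹) = 1 := by
    have := hΨ v₀ ((p i).append (.cons h (p j).reverse))
    rwa [walkGain_append, walkGain_cons] at this
  calc Ψ i j = ↑(θ i)⁻¹ * (θ i * (Ψ i j * ↑(θ j)⁻¹)) * θ j := by simp [mul_assoc]
    _ = ↑(θ i)⁻¹ * θ j := by rw [hcycle, mul_one]

end WalkGain

theorem charpoly_diagonal_units_conj {ι R : Type*} [Fintype ι] [DecidableEq ι] [CommRing R]
    (θ : ι → Rˣ) (N : Matrix ι ι R) :
    (diagonal (fun i => (↑(θ i)⁻¹ : R)) * N * diagonal (fun i => (θ i : R))).charpoly =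
      N.charpoly := by
  rw [charpoly_mul_comm, ← mul_assoc, diagonal_mul_diagonal]
  simp

theorem eq_div_norm_mul_norm_div_of_nonneg {z w c : ℂ} (hz : z ≠ 0) (hw : w ≠ 0)
    (hc : ‖c‖ = 1) (h : 0 ≤ starRingEnd ℂ z * c * w) :
    c = z / ‖z‖ * (‖w‖ / w) := by
  have ht : starRingEnd ℂ z * c * w = ‖z‖ * ‖w‖ := by
    calc starRingEnd ℂ z * c * w = (starRingEnd ℂ z * c * w).re :=
          Complex.eq_re_of_ofReal_le (r := 0) (by simpa using h)
      _ = ‖starRingEnd ℂ z * c * w‖ := by rw [Complex.re_eq_norm.mpr h]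
      _ = ‖z‖ * ‖w‖ := by simp [hc]
  field_simp
  apply mul_left_cancel₀ ((map_ne_zero (starRingEnd ℂ)).mpr hz)
  linear_combination (‖z‖ : ℂ) * ht - ‖w‖ * Complex.conj_mul' z

section EqualityCase


variable {ι : Type*} [Fintype ι] [DecidableEq ι]

theorem mulVec_map_norm_eq_and_nonneg_of_lam1_eq {A : Matrix ι ι ℂ}
    (hA : (A.map fun z => (‖z‖ : ℂ)).IsHermitian)
    (heq : lam1 A = lam1 (A.map fun z => (‖z‖ : ℂ))) {x : ι → ℂ}
    (hx : A *ᵥ x = (lam1 A : ℂ) • x) :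
    (A.map fun z => (‖z‖ : ℂ)) *ᵥ (fun i => (‖x i‖ : ℂ)) =
        (lam1 (A.map fun z => (‖z‖ : ℂ)) : ℂ) • (fun i => (‖x i‖ : ℂ)) ∧
      ∀ i j, 0 ≤ star (x i) * A i j * x j := by
  set y : ι → ℂ := fun i => (‖x i‖ : ℂ)
  have hyy : star y ⬝ᵥ y = star x ⬝ᵥ x :=
    Finset.sum_congr rfl fun i _ => by simp [y, Complex.conj_mul', sq]
  have hqx : (star x ⬝ᵥ A *ᵥ x).re = lam1 A * (star x ⬝ᵥ x).re := by
    rw [hx, dotProduct_smul, smul_eq_mul, Complex.re_ofReal_mul]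
  have hle := re_star_dotProduct_mulVec_le_map_norm A x
  have hle' := re_star_dotProduct_mulVec_le hA y
  rw [hyy, ← heq] at hle'
  refine ⟨mulVec_eq_lam1_smul_of_re_eq hA ?_,
    nonneg_of_re_star_dotProduct_mulVec_eq_map_norm (by linarith)⟩
  rw [hyy, ← heq]
  linarith

end EqualityCase

section GainMatrix


variable {n : ℕ} {Γ : SimpleGraph (Fin n)} [DecidableRel Γ.Adj] {Ψ : Fin n → Fin n → ℂ}

def gainAdjMatrix (Γ : SimpleGraph (Fin n)) [DecidableRel Γ.Adj] (Ψ : Fin n → Fin n → ℂ) :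
    Matrix (Fin n) (Fin n) ℂ :=
  Matrix.of fun i j => if Γ.Adj i j then Ψ i j else 0

theorem isHermitian_gainAdjMatrix (hΨ : ∀ i j, Γ.Adj i j → ‖Ψ i j‖ = 1)
    (hinv : ∀ i j, Γ.Adj i j → Ψ j i = (Ψ i j)⁻¹) : (gainAdjMatrix Γ Ψ).IsHermitian := by
  ext i j
  by_cases h : Γ.Adj i j
  · simp [gainAdjMatrix, h, h.symm, hinv i j h, Complex.inv_eq_conj (hΨ i j h)]
  · have h' : ¬Γ.Adj j i := fun h' => h h'.symm
    simp [gainAdjMatrix, h, h']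

theorem map_norm_gainAdjMatrix (hΨ : ∀ i j, Γ.Adj i j → ‖Ψ i j‖ = 1) :
    (gainAdjMatrix Γ Ψ).map (fun z => (‖z‖ : ℂ)) = Γ.adjMatrix ℂ := by
  ext i j
  by_cases h : Γ.Adj i j <;> simp [gainAdjMatrix, h, hΨ i j]

theorem lam1_gainAdjMatrix_of_units {θ : Fin n → ℂˣ}
    (hθ : ∀ i j, Γ.Adj i j → Ψ i j = ↑(θ i)⁻¹ * θ j) :
    lam1 (gainAdjMatrix Γ Ψ) = lam1 (Γ.adjMatrix ℂ) := by
  have hconj : gainAdjMatrix Γ Ψ =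
      diagonal (fun i => (↑(θ i)⁻¹ : ℂ)) * Γ.adjMatrix ℂ * diagonal (fun i => (θ i : ℂ)) := by
    ext i j
    rw [mul_diagonal, diagonal_mul]
    by_cases h : Γ.Adj i j <;> simp [gainAdjMatrix, h, hθ i j]
  simp only [lam1, hconj, charpoly_diagonal_units_conj]

theorem exists_units_of_lam1_gainAdjMatrix_eq (hΓ : Γ.Connected)
    (hΨ : ∀ i j, Γ.Adj i j → ‖Ψ i j‖ = 1) (hinv : ∀ i j, Γ.Adj i j → Ψ j i = (Ψ i j)⁻¹)
    (heq : lam1 (gainAdjMatrix Γ Ψ) = lam1 (Γ.adjMatrix ℂ)) :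
    ∃ θ : Fin n → ℂˣ, ∀ i j, Γ.Adj i j → Ψ i j = ↑(θ i)⁻¹ * θ j := by
  have := hΓ.nonempty
  have hA := isHermitian_gainAdjMatrix hΨ hinv
  have hB := map_norm_gainAdjMatrix hΨ
  have hBH : (Γ.adjMatrix ℂ).IsHermitian := by
    ext i j
    simp [Γ.adj_comm]
  obtain ⟨x, hx0, hx⟩ := exists_mulVec_eq_lam1_smul hA
  obtain ⟨hBx, hnonneg⟩ :=
    mulVec_map_norm_eq_and_nonneg_of_lam1_eq (hB ▸ hBH) (hB ▸ heq) hx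
  rw [hB] at hBx
  have hxne : ∀ i, x i ≠ 0 := fun i => norm_ne_zero_iff.mp <|
    ne_zero_of_adjMatrix_mulVec_eq_smul hΓ (w := fun i => ‖x i‖) (fun _ => norm_nonneg _)
      (fun h => hx0 (funext fun i => norm_eq_zero.mp (congrFun h i))) hBx i
  refine ⟨fun i => Units.mk0 ((‖x i‖ : ℂ) / x i) (div_ne_zero (by simpa using hxne i) (hxne i)),
    fun i j h => ?_⟩
  have hnonneg' := hnonneg i j
  simp only [gainAdjMatrix, of_apply, h, if_true] at hnonneg'
  simpa using eq_div_norm_mul_norm_div_of_nonneg (hxne i) (hxne j) (hΨ i j h) hnonneg'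

end GainMatrix

theorem statement14_general {n : ℕ} (Γ : SimpleGraph (Fin n)) [DecidableRel Γ.Adj]
    (hconn : Γ.Connected) (H : Subgroup ℂˣ)
    (hT : ∀ u : ℂˣ, u ∈ H → ‖((u : ℂˣ) : ℂ)‖ = 1)
    (Ψ : Fin n → Fin n → ℂ)
    (hmem : ∀ i j, Γ.Adj i j → ∃ u ∈ H, ((u : ℂˣ) : ℂ) = Ψ i j)
    (hinv : ∀ i j, Γ.Adj i j → Ψ j i = (Ψ i j)⁻¹) :
    IsBalanced Γ Ψ ↔
      lam1 (Matrix.of fun i j => if Γ.Adj i j then Ψ i j else 0) =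
        lam1 (Γ.adjMatrix ℂ) := by
  have hΨ : ∀ i j, Γ.Adj i j → ‖Ψ i j‖ = 1 := fun i j h => by
    obtain ⟨u, hu, hu'⟩ := hmem i j h
    exact hu' ▸ hT u hu
  constructor
  · intro hbal
    obtain ⟨θ, hθ⟩ := exists_units_of_isBalanced hconn hbal
    exact lam1_gainAdjMatrix_of_units hθ
  · intro heq
    obtain ⟨θ, hθ⟩ := exists_units_of_lam1_gainAdjMatrix_eq hconn hΨ hinv heq
    exact isBalanced_of_units hθ

/-- a connected gain graph on a finite subgroup of 𝕋 is balanced iff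
its index equals the index of the underlying graph. -/
theorem statement14 {n : ℕ} (Γ : SimpleGraph (Fin n)) [DecidableRel Γ.Adj]
    (hconn : Γ.Connected) (H : Subgroup ℂˣ) (hfin : (H : Set ℂˣ).Finite)
    (hT : ∀ u : ℂˣ, u ∈ H → ‖((u : ℂˣ) : ℂ)‖ = 1)
    (Ψ : Fin n → Fin n → ℂ)
    (hmem : ∀ i j, Γ.Adj i j → ∃ u ∈ H, ((u : ℂˣ) : ℂ) = Ψ i j)
    (hinv : ∀ i j, Γ.Adj i j → Ψ j i = (Ψ i j)⁻¹) :
    IsBalanced Γ Ψ ↔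
      lam1 (Matrix.of fun i j => if Γ.Adj i j then Ψ i j else 0) =
        lam1 (Γ.adjMatrix ℂ) :=
  statement14_general Γ hconn H hT Ψ hmem hinv

end GainPaper
end
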